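/- The matrix A = M⁻¹ · W₄ · M = [[-3, 5/2], [-4, 3]], where M = [[1, -1], [2, -1]] and W₄ = [[0, 1/2], [-2, 0]], has determinant 1 and normalizes Γ₀(8): for every γ ∈ Γ₀(8), A · γ · A⁻¹ lies in SL₂(ℤ) with lower-left entry divisible by 8. Equivalently, W₄ normalizes the conjugate group M · Γ₀(8) · M⁻¹. -/
import Mathlib


open Matrix

/-- M = [[1,-1],[2,-1]] ∈ SL₂(ℤ), viewed in SL₂(ℝ). -/
noncomputable def Mmat : Matrix (Fin 2) (Fin 2) ℝ := !![1, -1; 2, -1]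

/-- W₄ = [[0, 1/2], [-2, 0]]. -/
noncomputable def W4 : Matrix (Fin 2) (Fin 2) ℝ := !![0, 1/2; -2, 0]

/-- The matrix A = M⁻¹ · W₄ · M. -/
noncomputable def Amat : Matrix (Fin 2) (Fin 2) ℝ := Mmat⁻¹ * W4 * Mmat

lemma Mmat_inv : Mmat⁻¹ = !![(-1 : ℝ), 1; -2, 1] := by
  apply Matrix.inv_eq_right_inv
  ext i j
  fin_cases i <;> fin_cases j <;>
    simp [Mmat, Matrix.mul_apply, Fin.sum_univ_two, Matrix.one_apply] <;> norm_num

lemma Amat_eq : Amat = !![(-3 : ℝ), 5/2; -4, 3] := by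
  rw [Amat, Mmat_inv, W4, Mmat]
  norm_num [Matrix.mul_fin_two]

lemma Amat_inv : Amat⁻¹ = !![(3 : ℝ), -5/2; 4, -3] := by
  apply Matrix.inv_eq_right_inv
  rw [Amat_eq]
  ext i j
  fin_cases i <;> fin_cases j <;>
    simp [Matrix.mul_apply, Fin.sum_univ_two, Matrix.one_apply] <;> norm_num

/-- A = M⁻¹·W₄·M equals [[-3,5/2],[-4,3]], has determinant 1, and normalizes Γ₀(8):
for every γ = [[a,b],[c,d]] ∈ SL₂(ℤ) with 8 ∣ c, the conjugate A · γ · A⁻¹ is an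
integral matrix of determinant 1 with lower-left entry divisible by 8.
(Equivalently, W₄ normalizes M · Γ₀(8) · M⁻¹.) -/
theorem Amat_normalizes_gamma0_eight :
    Amat = !![(-3 : ℝ), 5/2; -4, 3] ∧
    Amat.det = 1 ∧
    ∀ a b c d : ℤ, a * d - b * c = 1 → (8 : ℤ) ∣ c →
      ∃ a' b' c' d' : ℤ,
        Amat * !![(a : ℝ), (b : ℝ); (c : ℝ), (d : ℝ)] * Amat⁻¹ =
          !![(a' : ℝ), (b' : ℝ); (c' : ℝ), (d' : ℝ)] ∧
        a' * d' - b' * c' = 1 ∧ (8 : ℤ) ∣ c' := by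
  refine ⟨Amat_eq, by rw [Amat_eq]; norm_num [Matrix.det_fin_two_of], ?_⟩
  intro a b c d hdet hc
  obtain ⟨k, rfl⟩ := hc
  have hodd : Odd (a * d) := ⟨4 * b * k, by linarith⟩
  obtain ⟨ha, hd⟩ := Int.odd_mul.mp hodd
  have hev : Even (a - d) := Odd.sub_odd ha hd
  obtain ⟨m, hm⟩ := hev
  have ham : a = d + 2 * m := by omega
  subst ham
  refine ⟨d - 18 * m - 12 * b + 60 * k, 9 * b - 50 * k + 15 * m,
    8 * (-3 * m - 2 * b + 9 * k), d + 20 * m + 12 * b - 60 * k, ?_, ?_, ⟨_, rfl⟩⟩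
  · rw [Amat_inv, Amat_eq]
    ext i j
    fin_cases i <;> fin_cases j <;>
      simp [Matrix.mul_apply, Fin.sum_univ_two] <;> push_cast <;> ring
  · nlinarith [hdet]
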